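/- arXiv:1409.7847 — 2 statements merged into one kernel-verified Lean document; each statement's English description precedes it below -/
import Mathlib

section
/- The matrix exponential is strictly monotone on Sym(n): for all symmetric matrices A ≠ B, ⟨exp(A) − exp(B), A − B⟩ > 0, where ⟨X,Y⟩ = tr(XᵀY). -/
/-!
Diagonalize `A = U diag(a) Uᵀ` and `B = V diag(b) Vᵀ` with `U`, `V` orthogonal. The Hadamard square
`M = (Uᵀ V) ⊙ (Uᵀ V)` of the orthogonal matrix `Uᵀ V` is doubly stochastic, and it turns traces of
products into double sums:
`tr ((f(A) - g(B)) (h(A) - k(B))) = ∑ i j, M i j (f aᵢ - g bⱼ) (h aᵢ - k bⱼ)`.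
With `f = g = exp` and `h = k = id` each term is nonnegative because `exp` is increasing, and
positive when `M i j ≠ 0` and `aᵢ ≠ bⱼ`; with all four functions the identity, the sum is
`tr ((A - B)ᵀ (A - B)) > 0`, which provides such a pair `(i, j)`.
-/

open Matrix

attribute [local instance] Matrix.normedAddCommGroup Matrix.normedSpace

section StrictMono

variable {ι R : Type*} [Fintype ι] [Ring R] [LinearOrder R] [IsStrictOrderedRing R] {f : R → R}

theorem StrictMono.sub_mul_sub_pos (hf : StrictMono f) {x y : R} (h : x ≠ y) :
    0 < (f x - f y) * (x - y) := by
  rcases h.lt_or_gt with h | h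
  · exact mul_pos_of_neg_of_neg (sub_neg.mpr (hf h)) (sub_neg.mpr h)
  · exact mul_pos (sub_pos.mpr (hf h)) (sub_pos.mpr h)

theorem StrictMono.sub_mul_sub_nonneg (hf : StrictMono f) (x y : R) :
    0 ≤ (f x - f y) * (x - y) := by
  rcases eq_or_ne x y with rfl | h
  · simp
  · exact (hf.sub_mul_sub_pos h).le

theorem StrictMono.sum_sum_mul_sub_mul_sub_pos (hf : StrictMono f)
    {c : ι → ι → R} (hc : ∀ i j, 0 ≤ c i j) {x y : ι → R}
    (h : 0 < ∑ i, ∑ j, c i j * ((x i - y j) * (x i - y j))) :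
    0 < ∑ i, ∑ j, c i j * ((f (x i) - f (y j)) * (x i - y j)) := by
  simp only [← Fintype.sum_prod_type'] at h ⊢
  obtain ⟨⟨i, j⟩, -, hij⟩ := (Finset.sum_pos_iff_of_nonneg
    fun p _ => mul_nonneg (hc p.1 p.2) (mul_self_nonneg _)).mp h
  have hc_pos : 0 < c i j := (hc i j).lt_of_ne fun h0 => by simp [← h0] at hij
  have hxy : x i ≠ y j := fun hxy => by simp [hxy] at hij
  exact Finset.sum_pos' (fun p _ => mul_nonneg (hc p.1 p.2) (hf.sub_mul_sub_nonneg _ _))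
    ⟨(i, j), Finset.mem_univ _, mul_pos hc_pos (hf.sub_mul_sub_pos hxy)⟩

end StrictMono

namespace Matrix

variable {ι R : Type*} [Fintype ι] [DecidableEq ι]

section CommRing

variable [CommRing R]

theorem trace_conj_diagonal_mul_conj_diagonal (U V : Matrix ι ι R) (a b : ι → R) :
    (U * diagonal a * Uᵀ * (V * diagonal b * Vᵀ)).trace
      = a ᵥ* ((Uᵀ * V) ⊙ (Uᵀ * V)) ⬝ᵥ b := by
  rw [dotProduct_vecMul_hadamard, transpose_mul, transpose_mul, diagonal_transpose,
    transpose_transpose]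
  simp only [Matrix.mul_assoc]
  rw [trace_mul_comm U]
  simp only [Matrix.mul_assoc]

theorem trace_conj_diagonal_mul_conj_diagonal_self {U : Matrix ι ι R} (hU : Uᵀ * U = 1)
    (a b : ι → R) :
    (U * diagonal a * Uᵀ * (U * diagonal b * Uᵀ)).trace = a ⬝ᵥ b := by
  rw [trace_conj_diagonal_mul_conj_diagonal, hU, hadamard_one, diag_one, diagonal_one',
    vecMul_one]

end CommRing

section LinearOrder

variable [CommRing R] [LinearOrder R] [IsStrictOrderedRing R]

theorem hadamard_self_mem_doublyStochastic {W : Matrix ι ι R} (hW : Wᵀ * W = 1) :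
    W ⊙ W ∈ doublyStochastic R ι := by
  refine mem_doublyStochastic_iff_sum.mpr ⟨fun i j => mul_self_nonneg _, fun i => ?_, fun j => ?_⟩
  · simpa [mul_apply] using congr_fun₂ (mul_eq_one_comm.mp hW : W * Wᵀ = 1) i i
  · simpa [mul_apply] using congr_fun₂ hW j j

theorem sum_sum_mul_sub_mul_sub_of_mem_doublyStochastic {M : Matrix ι ι R}
    (hM : M ∈ doublyStochastic R ι) (f g a b : ι → R) :
    ∑ i, ∑ j, M i j * ((f i - g j) * (a i - b j))
      = f ⬝ᵥ a - f ᵥ* M ⬝ᵥ b - a ᵥ* M ⬝ᵥ g + g ⬝ᵥ b := by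
  have sum_row : ∀ v : ι → R, ∑ i, ∑ j, M i j * v i = ∑ i, v i := fun v => by
    simp_rw [← Finset.sum_mul, sum_row_of_mem_doublyStochastic hM, one_mul]
  have sum_col : ∀ v : ι → R, ∑ i, ∑ j, M i j * v j = ∑ j, v j := fun v => by
    rw [Finset.sum_comm]
    simp_rw [← Finset.sum_mul, sum_col_of_mem_doublyStochastic hM, one_mul]
  have bilinear : ∀ v w : ι → R, ∑ i, ∑ j, M i j * (v i * w j) = v ᵥ* M ⬝ᵥ w := fun v w => by
    rw [← dotProduct_mulVec]
    simp only [dotProduct, mulVec, Finset.mul_sum]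
    exact Finset.sum_congr rfl fun i _ => Finset.sum_congr rfl fun j _ => by ring
  calc ∑ i, ∑ j, M i j * ((f i - g j) * (a i - b j))
      = ∑ i, ∑ j, M i j * (f i * a i) - ∑ i, ∑ j, M i j * (f i * b j)
          - ∑ i, ∑ j, M i j * (a i * g j) + ∑ i, ∑ j, M i j * (g j * b j) := by
        simp only [← Finset.sum_sub_distrib, ← Finset.sum_add_distrib]
        exact Finset.sum_congr rfl fun i _ => Finset.sum_congr rfl fun j _ => by ring
    _ = f ⬝ᵥ a - f ᵥ* M ⬝ᵥ b - a ᵥ* M ⬝ᵥ g + g ⬝ᵥ b := by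
        rw [sum_row (fun i => f i * a i), sum_col (fun j => g j * b j), bilinear, bilinear]
        rfl

theorem trace_sub_mul_sub_conj_diagonal {U V : Matrix ι ι R} (hU : Uᵀ * U = 1)
    (hV : Vᵀ * V = 1) (f g a b : ι → R) :
    ((U * diagonal f * Uᵀ - V * diagonal g * Vᵀ) *
        (U * diagonal a * Uᵀ - V * diagonal b * Vᵀ)).trace
      = ∑ i, ∑ j, ((Uᵀ * V) ⊙ (Uᵀ * V)) i j * ((f i - g j) * (a i - b j)) := by
  have hW : (Uᵀ * V)ᵀ * (Uᵀ * V) = 1 := by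
    rw [transpose_mul, transpose_transpose, Matrix.mul_assoc, ← Matrix.mul_assoc U,
      mul_eq_one_comm.mp hU, Matrix.one_mul, hV]
  rw [sum_sum_mul_sub_mul_sub_of_mem_doublyStochastic (hadamard_self_mem_doublyStochastic hW),
    sub_mul, mul_sub, mul_sub, trace_sub, trace_sub, trace_sub,
    trace_conj_diagonal_mul_conj_diagonal_self hU, trace_conj_diagonal_mul_conj_diagonal_self hV,
    trace_conj_diagonal_mul_conj_diagonal, trace_mul_comm (V * _ * _),
    trace_conj_diagonal_mul_conj_diagonal]
  ring

end LinearOrder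

theorem IsSymm.exists_eq_conj_diagonal {A : Matrix ι ι ℝ} (hA : A.IsSymm) :
    ∃ U : Matrix ι ι ℝ, Uᵀ * U = 1 ∧ ∃ d : ι → ℝ, A = U * diagonal d * Uᵀ := by
  have hA' : A.IsHermitian := isHermitian_iff_isSymm.mpr hA
  refine ⟨hA'.eigenvectorUnitary, ?_, hA'.eigenvalues, ?_⟩
  · simpa [star_eq_conjTranspose] using mem_unitaryGroup_iff'.mp hA'.eigenvectorUnitary.2
  · simpa [star_eq_conjTranspose] using hA'.spectral_theorem

theorem exp_conj_diagonal {U : Matrix ι ι ℝ} (hU : Uᵀ * U = 1) (d : ι → ℝ) :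
    NormedSpace.exp (U * diagonal d * Uᵀ) = U * diagonal (Real.exp ∘ d) * Uᵀ := by
  have hinv : U⁻¹ = Uᵀ := inv_eq_left_inv hU
  rw [← hinv, exp_conj U _ ((isUnit_iff_isUnit_det U).mpr (isUnit_det_of_left_inverse hU)),
    exp_diagonal, Pi.exp_def, Real.exp_eq_exp_ℝ]
  rfl

theorem trace_transpose_mul_self_pos {m n : Type*} [Fintype m] [Fintype n] {X : Matrix m n ℝ}
    (hX : X ≠ 0) : 0 < (Xᵀ * X).trace := by
  rw [← conjTranspose_eq_transpose_of_trivial]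
  exact (posSemidef_conjTranspose_mul_self X).trace_nonneg.lt_of_ne'
    (trace_conjTranspose_mul_self_eq_zero_iff.not.mpr hX)

end Matrix

/-- The matrix exponential is strictly monotone on the symmetric matrices:
`⟨exp A − exp B, A − B⟩ > 0` for all symmetric `A ≠ B`. -/
theorem stmt_9 {n : ℕ} (A B : Matrix (Fin n) (Fin n) ℝ)
    (hA : A.IsSymm) (hB : B.IsSymm) (hAB : A ≠ B) :
    0 < ((NormedSpace.exp A - NormedSpace.exp B)ᵀ * (A - B)).trace := by
  have hpos := trace_transpose_mul_self_pos (sub_ne_zero.mpr hAB)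
  rw [transpose_sub, hA.eq, hB.eq] at hpos
  rw [transpose_sub, ← exp_transpose, ← exp_transpose, hA.eq, hB.eq]
  obtain ⟨U, hU, a, rfl⟩ := hA.exists_eq_conj_diagonal
  obtain ⟨V, hV, b, rfl⟩ := hB.exists_eq_conj_diagonal
  rw [trace_sub_mul_sub_conj_diagonal hU hV] at hpos
  rw [exp_conj_diagonal hU, exp_conj_diagonal hV, trace_sub_mul_sub_conj_diagonal hU hV]
  exact Real.exp_strictMono.sum_sum_mul_sub_mul_sub_pos (fun i j => mul_self_nonneg _) hpos
end

section
/- The principal matrix logarithm is strictly monotone on PSym(n): for all positive definite symmetric matrices P ≠ Q, ⟨log P − log Q, P − Q⟩ > 0, where ⟨X,Y⟩ = tr(XᵀY). -/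
/-!
Diagonalize `P = Uᵀ diag(λ) U` and `Q = Vᵀ diag(μ) V` orthogonally and put `W = U Vᵀ`.
For any `f`, `Uᵀ diag(f ∘ λ) U - Vᵀ diag(f ∘ μ) V = Uᵀ X_f V` where `X_f` has entries
`(f λᵢ - f μⱼ) Wᵢⱼ`, so the trace pairing becomes `∑ᵢⱼ (log λᵢ - log μⱼ)(λᵢ - μⱼ) Wᵢⱼ²`.
Each term is nonnegative because `log` is increasing, and `P ≠ Q` forces some `Wᵢⱼ ≠ 0` with
`λᵢ ≠ μⱼ`, whose term is positive.
-/

open Matrix Finset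

namespace Matrix

variable {ι R : Type*} [Fintype ι] [CommRing R]

theorem trace_transpose_mul_eq_sum (X Y : Matrix ι ι R) :
    (Xᵀ * Y).trace = ∑ i, ∑ j, X i j * Y i j := by
  rw [Finset.sum_comm]
  simp only [trace, diag, mul_apply, transpose_apply]

variable [DecidableEq ι]

theorem diagonal_mul_sub_mul_diagonal_apply (a b : ι → R) (W : Matrix ι ι R) (i j : ι) :
    (diagonal a * W - W * diagonal b) i j = (a i - b j) * W i j := by
  rw [sub_apply, diagonal_mul, mul_diagonal, sub_mul, mul_comm (W i j)]

theorem conj_diagonal_sub_conj_diagonal {U V : Matrix ι ι R} (hU : Uᵀ * U = 1)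
    (hV : Vᵀ * V = 1) (a b : ι → R) :
    Uᵀ * diagonal a * U - Vᵀ * diagonal b * V =
      Uᵀ * (diagonal a * (U * Vᵀ) - U * Vᵀ * diagonal b) * V := by
  have hUU (M : Matrix ι ι R) : Uᵀ * (U * M) = M := by rw [← Matrix.mul_assoc, hU, Matrix.one_mul]
  simp only [Matrix.mul_sub, Matrix.sub_mul, Matrix.mul_assoc, hV, Matrix.mul_one, hUU]

theorem trace_transpose_conj_mul_conj {U V : Matrix ι ι R} (hU : U * Uᵀ = 1)
    (hV : V * Vᵀ = 1) (X Y : Matrix ι ι R) :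
    ((Uᵀ * X * V)ᵀ * (Uᵀ * Y * V)).trace = (Xᵀ * Y).trace := by
  calc ((Uᵀ * X * V)ᵀ * (Uᵀ * Y * V)).trace
      = (Vᵀ * (Xᵀ * (U * Uᵀ) * Y) * V).trace := by
        simp only [transpose_mul, transpose_transpose, Matrix.mul_assoc]
    _ = (Xᵀ * Y * (V * Vᵀ)).trace := by
        rw [trace_mul_cycle, ← trace_mul_cycle', hU, Matrix.mul_one, Matrix.mul_assoc]
    _ = (Xᵀ * Y).trace := by rw [hV, Matrix.mul_one]

end Matrix

section StrictMonoOn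

variable {R : Type*} [CommRing R] [LinearOrder R] [IsStrictOrderedRing R]

theorem StrictMonoOn.sub_mul_sub_pos {f : R → R} {s : Set R} (hf : StrictMonoOn f s) {a b : R}
    (ha : a ∈ s) (hb : b ∈ s) (hab : a ≠ b) : 0 < (f a - f b) * (a - b) := by
  rcases hab.lt_or_gt with h | h
  · exact mul_pos_of_neg_of_neg (sub_neg.mpr (hf ha hb h)) (sub_neg.mpr h)
  · exact mul_pos (sub_pos.mpr (hf hb ha h)) (sub_pos.mpr h)

theorem StrictMonoOn.sub_mul_sub_nonneg {f : R → R} {s : Set R} (hf : StrictMonoOn f s)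
    {a b : R} (ha : a ∈ s) (hb : b ∈ s) : 0 ≤ (f a - f b) * (a - b) := by
  rcases eq_or_ne a b with rfl | hab
  · simp
  · exact (hf.sub_mul_sub_pos ha hb hab).le

variable {ι : Type*} [Fintype ι] [DecidableEq ι]

theorem StrictMonoOn.trace_conj_diagonal_sub_pos {f : R → R} {s : Set R} (hf : StrictMonoOn f s)
    {U V : Matrix ι ι R} (hU : Uᵀ * U = 1) (hV : Vᵀ * V = 1) {d e : ι → R} (hd : ∀ i, d i ∈ s)
    (he : ∀ j, e j ∈ s) (hne : Uᵀ * diagonal d * U ≠ Vᵀ * diagonal e * V) :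
    0 < ((Uᵀ * diagonal (f ∘ d) * U - Vᵀ * diagonal (f ∘ e) * V)ᵀ *
      (Uᵀ * diagonal d * U - Vᵀ * diagonal e * V)).trace := by
  rw [conj_diagonal_sub_conj_diagonal hU hV, conj_diagonal_sub_conj_diagonal hU hV,
    trace_transpose_conj_mul_conj (mul_eq_one_comm.mp hU) (mul_eq_one_comm.mp hV),
    trace_transpose_mul_eq_sum]
  rw [← sub_ne_zero, conj_diagonal_sub_conj_diagonal hU hV] at hne
  set W := U * Vᵀ
  obtain ⟨i, j, hij⟩ : ∃ i j, (diagonal d * W - W * diagonal e) i j ≠ 0 := by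
    by_contra! h
    apply hne
    rw [show diagonal d * W - W * diagonal e = 0 from Matrix.ext h, Matrix.mul_zero,
      Matrix.zero_mul]
  rw [diagonal_mul_sub_mul_diagonal_apply, mul_ne_zero_iff, sub_ne_zero] at hij
  have hentry_mul (i j : ι) : (diagonal (f ∘ d) * W - W * diagonal (f ∘ e)) i j *
      (diagonal d * W - W * diagonal e) i j = (f (d i) - f (e j)) * (d i - e j) * W i j ^ 2 := by
    simp only [diagonal_mul_sub_mul_diagonal_apply, Function.comp_apply]
    ring
  have hterm_nonneg (i j : ι) : 0 ≤ (f (d i) - f (e j)) * (d i - e j) * W i j ^ 2 :=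
    mul_nonneg (hf.sub_mul_sub_nonneg (hd i) (he j)) (sq_nonneg _)
  simp only [hentry_mul]
  refine sum_pos' (fun i _ => sum_nonneg fun j _ => hterm_nonneg i j) ⟨i, mem_univ i,
    sum_pos' (fun j _ => hterm_nonneg i j) ⟨j, mem_univ j, ?_⟩⟩
  exact mul_pos (hf.sub_mul_sub_pos (hd i) (he j) hij.1) (sq_pos_of_ne_zero hij.2)

end StrictMonoOn

theorem Matrix.PosDef.exists_orthogonal_diagonalization {ι : Type*} [Fintype ι] [DecidableEq ι]
    {P : Matrix ι ι ℝ} (hP : P.PosDef) :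
    ∃ (U : Matrix ι ι ℝ) (d : ι → ℝ), Uᵀ * U = 1 ∧ (∀ i, 0 < d i) ∧ P = Uᵀ * diagonal d * U := by
  have hH := hP.isHermitian
  refine ⟨star (hH.eigenvectorUnitary : Matrix ι ι ℝ), hH.eigenvalues, ?_,
    hP.eigenvalues_pos, ?_⟩
  · rw [← conjTranspose_eq_transpose_of_trivial, ← star_eq_conjTranspose, star_star]
    exact mem_unitaryGroup_iff.mp hH.eigenvectorUnitary.2
  · rw [← conjTranspose_eq_transpose_of_trivial, ← star_eq_conjTranspose, star_star]
    simpa using hH.spectral_theorem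

/-- The principal matrix logarithm (the primary matrix function induced by the real
logarithm) is strictly monotone on the positive definite symmetric matrices:
`⟨log P − log Q, P − Q⟩ > 0` for `P ≠ Q`. -/
theorem stmt_10 {n : ℕ} (mlog : Matrix (Fin n) (Fin n) ℝ → Matrix (Fin n) (Fin n) ℝ)
    (hmlog : ∀ (Q : Matrix (Fin n) (Fin n) ℝ) (d : Fin n → ℝ), Qᵀ * Q = 1 →
      mlog (Qᵀ * Matrix.diagonal d * Q) = Qᵀ * Matrix.diagonal (Real.log ∘ d) * Q) :
    ∀ P Q : Matrix (Fin n) (Fin n) ℝ, P.PosDef → Q.PosDef → P ≠ Q →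
      0 < ((mlog P - mlog Q)ᵀ * (P - Q)).trace := by
  intro P Q hP hQ hne
  obtain ⟨U, d, hU, hd, rfl⟩ := hP.exists_orthogonal_diagonalization
  obtain ⟨V, e, hV, he, rfl⟩ := hQ.exists_orthogonal_diagonalization
  rw [hmlog U d hU, hmlog V e hV]
  exact Real.strictMonoOn_log.trace_conj_diagonal_sub_pos hU hV hd he hne
end
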